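/- (Compactness of normalized positive solutions) Let Q_j : X → ℝ (j ∈ ℕ) be locally uniformly bounded (for every finite S ⊂ X, sup_j sup_{x ∈ S} |Q_j(x)| < ∞) and suppose Q_j → Q_∞ pointwise on X. Let u_j : X → ℝ satisfy u_j > 0 and −Δu_j + Q_j u_j = 0 on X. Fix x₀ ∈ X and set û_j(x) = u_j(x)/u_j(x₀). Then there is a subsequence of (û_j) converging pointwise on X to a function û_∞ with û_∞ > 0 on X, û_∞(x₀) = 1, and −Δû_∞ + Q_∞ û_∞ = 0 on X. -/

import Mathlib

open Finset Filter

noncomputable section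

variable {V : Type*}

/-- The (weighted) degree `d_x = ∑_{(x,y) ∈ E} μ_{xy}` of a vertex `x` in a locally
finite graph `G` with edge weights `μ`. -/
def deg (G : SimpleGraph V) [G.LocallyFinite] (μ : V → V → ℝ) (x : V) : ℝ :=
  ∑ y ∈ G.neighborFinset x, μ x y

/-- The graph Laplacian `(Δu)(x) = ∑_{(x,y) ∈ E} (μ_{xy}/d_x) (u(y) - u(x))`. -/
def lap (G : SimpleGraph V) [G.LocallyFinite] (μ : V → V → ℝ) (u : V → ℝ) (x : V) : ℝ :=
  ∑ y ∈ G.neighborFinset x, μ x y / deg G μ x * (u y - u x)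

/-- The squared gradient `|∇u|²(x) = ∑_{(x,y) ∈ E} (μ_{xy}/d_x) (u(y) - u(x))²`. -/
def gradSq (G : SimpleGraph V) [G.LocallyFinite] (μ : V → V → ℝ) (u : V → ℝ) (x : V) : ℝ :=
  ∑ y ∈ G.neighborFinset x, μ x y / deg G μ x * (u y - u x) ^ 2

/-- `d̂_x = sup_{(x,y) ∈ E} d_x / μ_{xy}`. -/
def dhat (G : SimpleGraph V) [G.LocallyFinite] (μ : V → V → ℝ) (x : V) : ℝ :=
  sSup {r : ℝ | ∃ y, G.Adj x y ∧ r = deg G μ x / μ x y}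

/-- The principal (Dirichlet) eigenvalue `λ₁(D, -Δ+Q)` of a finite subset `D ⊆ X`:
the infimum of the Rayleigh quotients `(∫_D (-Δu + Qu)·u) / (∫_D u²)` over test
functions `u` not identically zero on `D` and vanishing outside `D`, where
`∫_S f = ∑_{x ∈ S} f(x) d_x`. -/
def lambda1 (G : SimpleGraph V) [G.LocallyFinite] (μ : V → V → ℝ) (Q : V → ℝ)
    (D : Finset V) : ℝ :=
  sInf {r : ℝ | ∃ u : V → ℝ, (∃ x ∈ D, u x ≠ 0) ∧ (∀ x, x ∉ D → u x = 0) ∧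
    r = (∑ x ∈ D, (-lap G μ u x + Q x * u x) * u x * deg G μ x) /
        (∑ x ∈ D, (u x) ^ 2 * deg G μ x)}

/-- `λ₁(X, -Δ+Q)`: the limit of `λ₁(D_j, -Δ+Q)` along any exhaustion of `X` by finite
subsets; by monotonicity this equals the infimum of `λ₁(D, -Δ+Q)` over all nonempty
finite subsets `D` of `X`. -/
def lambda1Top (G : SimpleGraph V) [G.LocallyFinite] (μ : V → V → ℝ) (Q : V → ℝ) : ℝ :=
  sInf {r : ℝ | ∃ D : Finset V, D.Nonempty ∧ r = lambda1 G μ Q D}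

/-- `H` is the Dirichlet Green function of the ball `B(j) = {x | d(x,x₀) < j}`:
it is nonnegative, and for every `y ∈ B(j)` one has `Δ_x H(x,y) = -δ_y(x)` for
`x ∈ B(j)` and `H(x,y) = 0` for `x ∉ B(j)`. -/
def IsDirichletGreenOnBall (G : SimpleGraph V) [G.LocallyFinite] [DecidableEq V]
    (μ : V → V → ℝ) (x₀ : V) (j : ℕ) (H : V → V → ℝ) : Prop :=
  (∀ x y, 0 ≤ H x y) ∧
  ∀ y, G.dist y x₀ < j →
    (∀ x, G.dist x x₀ < j → lap G μ (fun z => H z y) x = -(if x = y then 1 else 0)) ∧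
    (∀ x, ¬ G.dist x x₀ < j → H x y = 0)

/-!
Evaluating `-Δu + qu = 0` at `x` gives `∑_{y ~ x} μ_{xy} u(y) = d_x (1 + q(x)) u(x)`; for
`u > 0` every term on the left is positive, so `u(y) ≤ d_x (1 + q(x)) / μ_{xy} · u(x)` for each
neighbour `y` (a one-step Harnack inequality). Since the `Q_j` are locally uniformly bounded
these constants do not depend on `j`, and chaining them along paths from `x₀` traps `û_j(x)` in
an interval `[K_x⁻¹, K_x]` for every `j`. A countable product of compact intervals is
sequentially compact, which gives the convergent subsequence; its limit is positive by the lower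
bounds, and the equation, being a finite sum at each vertex, passes to the pointwise limit.
-/

section Laplacian

variable (G : SimpleGraph V) [G.LocallyFinite] (μ : V → V → ℝ)

lemma deg_pos {x y : V} (hpos : ∀ y, G.Adj x y → 0 < μ x y) (hxy : G.Adj x y) :
    0 < deg G μ x :=
  Finset.sum_pos (fun z hz => hpos z ((G.mem_neighborFinset x z).mp hz))
    ⟨y, (G.mem_neighborFinset x y).mpr hxy⟩

lemma deg_mul_lap {x : V} (hd : deg G μ x ≠ 0) (u : V → ℝ) :
    deg G μ x * lap G μ u x = ∑ y ∈ G.neighborFinset x, μ x y * u y - deg G μ x * u x := by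
  calc deg G μ x * lap G μ u x
        = ∑ y ∈ G.neighborFinset x, μ x y * (u y - u x) := by
        rw [lap, Finset.mul_sum]
        exact Finset.sum_congr rfl fun y _ => by field_simp
    _ = _ := by
        rw [deg, Finset.sum_mul, ← Finset.sum_sub_distrib]
        exact Finset.sum_congr rfl fun y _ => mul_sub _ _ _

lemma lap_div_const (u : V → ℝ) (c : ℝ) (x : V) :
    lap G μ (fun z => u z / c) x = lap G μ u x / c := by
  rw [lap, lap, Finset.sum_div]
  exact Finset.sum_congr rfl fun z _ => by ring

lemma tendsto_lap {ι : Type*} {l : Filter ι} {v : ι → V → ℝ} {w : V → ℝ}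
    (hv : ∀ y, Tendsto (fun k => v k y) l (nhds (w y))) (x : V) :
    Tendsto (fun k => lap G μ (v k) x) l (nhds (lap G μ w x)) :=
  tendsto_finsetSum _ fun y _ => ((hv y).sub (hv x)).const_mul _

lemma neg_lap_add_mul_eq_zero_of_tendsto {ι : Type*} {l : Filter ι} [l.NeBot]
    {v : ι → V → ℝ} {w : V → ℝ} {q : ι → ℝ} {q' : ℝ} {x : V}
    (hv : ∀ y, Tendsto (fun k => v k y) l (nhds (w y))) (hq : Tendsto q l (nhds q'))
    (heq : ∀ k, -lap G μ (v k) x + q k * v k x = 0) :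
    -lap G μ w x + q' * w x = 0 := by
  have hlim := ((tendsto_lap G μ hv x).neg.add (hq.mul (hv x)))
  simp only [heq] at hlim
  exact tendsto_nhds_unique hlim tendsto_const_nhds

end Laplacian

section Harnack

variable {G : SimpleGraph V} [G.LocallyFinite] {μ : V → V → ℝ}

lemma mul_le_deg_mul_of_adj {x y : V} (hpos : ∀ y, G.Adj x y → 0 < μ x y) {u : V → ℝ}
    (hu : ∀ z, 0 ≤ u z) {q : ℝ} (heq : -lap G μ u x + q * u x = 0) (hxy : G.Adj x y) :
    μ x y * u y ≤ deg G μ x * (1 + q) * u x := by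
  have hd := deg_pos G μ hpos hxy
  have hsum : ∑ z ∈ G.neighborFinset x, μ x z * u z = deg G μ x * (1 + q) * u x := by
    have := deg_mul_lap G μ hd.ne' u
    rw [show lap G μ u x = q * u x by linarith] at this
    linarith
  rw [← hsum]
  exact Finset.single_le_sum
    (fun z hz => mul_nonneg (hpos z ((G.mem_neighborFinset x z).mp hz)).le (hu z))
    ((G.mem_neighborFinset x y).mpr hxy)

lemma exists_uniform_bound_of_adj {x y : V} (hpos : ∀ y, G.Adj x y → 0 < μ x y)
    {Q : ℕ → V → ℝ} (hQ : ∃ M, ∀ j, Q j x ≤ M) {u : ℕ → V → ℝ}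
    (hu : ∀ j z, 0 ≤ u j z)
    (heq : ∀ j, -lap G μ (u j) x + Q j x * u j x = 0) (hxy : G.Adj x y) :
    ∃ K, 0 < K ∧ ∀ j, u j y ≤ K * u j x := by
  obtain ⟨M, hM⟩ := hQ
  have hμ := hpos y hxy
  have hd := deg_pos G μ hpos hxy
  refine ⟨deg G μ x * (1 + max M 0) / μ x y, by positivity, fun j => ?_⟩
  rw [div_mul_eq_mul_div, le_div_iff₀ hμ, mul_comm]
  calc μ x y * u j y ≤ deg G μ x * (1 + Q j x) * u j x :=
        mul_le_deg_mul_of_adj hpos (hu j) (heq j) hxy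
    _ ≤ deg G μ x * (1 + max M 0) * u j x := by
        gcongr
        · exact hu j x
        · exact (hM j).trans (le_max_left M 0)

end Harnack

lemma exists_uniform_bound_of_reachable {G : SimpleGraph V} {u : ℕ → V → ℝ}
    (hadj : ∀ x y, G.Adj x y → ∃ K, 0 < K ∧ ∀ j, u j y ≤ K * u j x) {a b : V}
    (hab : G.Reachable a b) : ∃ K, 0 < K ∧ ∀ j, u j b ≤ K * u j a := by
  rw [SimpleGraph.reachable_iff_reflTransGen] at hab
  induction hab with
  | refl => exact ⟨1, one_pos, fun j => by rw [one_mul]⟩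
  | tail _ hcd ih =>
    obtain ⟨K, hK, hb⟩ := ih
    obtain ⟨K', hK', hd⟩ := hadj _ _ hcd
    exact ⟨K' * K, mul_pos hK' hK, fun j =>
      (hd j).trans <| by rw [mul_assoc]; exact mul_le_mul_of_nonneg_left (hb j) hK'.le⟩

lemma exists_subseq_tendsto_of_mem_Icc {ι : Type*} [Countable ι] {a b : ι → ℝ}
    {f : ℕ → ι → ℝ} (hf : ∀ j, f j ∈ Set.Icc a b) :
    ∃ g ∈ Set.Icc a b, ∃ φ : ℕ → ℕ, StrictMono φ ∧
      ∀ i, Tendsto (fun k => f (φ k) i) atTop (nhds (g i)) := by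
  obtain ⟨g, hg, φ, hφ, hlim⟩ := isCompact_Icc.tendsto_subseq hf
  exact ⟨g, hg, φ, hφ, tendsto_pi_nhds.mp hlim⟩

theorem compactness_general {V : Type*} [Countable V] (G : SimpleGraph V) [G.LocallyFinite]
    (μ : V → V → ℝ)
    (hpos : ∀ x y, G.Adj x y → 0 < μ x y) (hconn : G.Connected)
    (Q : ℕ → V → ℝ) (Qinf : V → ℝ)
    (hbd : ∀ S : Finset V, ∃ M : ℝ, ∀ j : ℕ, ∀ x ∈ S, |Q j x| ≤ M)
    (hconv : ∀ x, Tendsto (fun j => Q j x) atTop (nhds (Qinf x)))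
    (u : ℕ → V → ℝ) (hupos : ∀ j x, 0 < u j x)
    (heq : ∀ j x, -lap G μ (u j) x + Q j x * u j x = 0)
    (x₀ : V) :
    ∃ φ : ℕ → ℕ, StrictMono φ ∧ ∃ uinf : V → ℝ,
      (∀ x, Tendsto (fun k => u (φ k) x / u (φ k) x₀) atTop (nhds (uinf x))) ∧
      (∀ x, 0 < uinf x) ∧ uinf x₀ = 1 ∧
      ∀ x, -lap G μ uinf x + Qinf x * uinf x = 0 := by
  have hadj : ∀ x y, G.Adj x y → ∃ K, 0 < K ∧ ∀ j, u j y ≤ K * u j x := by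
    intro x y hxy
    obtain ⟨M, hM⟩ := hbd {x}
    exact exists_uniform_bound_of_adj (hpos x)
      ⟨M, fun j => (abs_le.mp (hM j x (Finset.mem_singleton_self x))).2⟩
      (fun j z => (hupos j z).le) (heq · x) hxy
  choose K _ hup using fun x =>
    exists_uniform_bound_of_reachable hadj (hconn.preconnected x₀ x)
  choose K' hK' hlow using fun x =>
    exists_uniform_bound_of_reachable hadj (hconn.preconnected x x₀)
  set v : ℕ → V → ℝ := fun j x => u j x / u j x₀
  have hv : ∀ j, v j ∈ Set.Icc (fun x => (K' x)⁻¹) K := fun j =>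
    ⟨fun x => by rw [le_div_iff₀ (hupos j x₀), inv_mul_le_iff₀ (hK' x)]; exact hlow x j,
     fun x => (div_le_iff₀ (hupos j x₀)).mpr (hup x j)⟩
  obtain ⟨uinf, huinf, φ, hφ, hlim⟩ := exists_subseq_tendsto_of_mem_Icc hv
  refine ⟨φ, hφ, uinf, hlim, fun x => ?_, ?_, fun x => ?_⟩
  · exact (inv_pos.mpr (hK' x)).trans_le (huinf.1 x)
  · refine tendsto_nhds_unique (hlim x₀) ?_
    simp only [v, div_self (hupos _ x₀).ne', tendsto_const_nhds]
  · refine neg_lap_add_mul_eq_zero_of_tendsto G μ hlim ((hconv x).comp hφ.tendsto_atTop)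
      fun k => ?_
    simp only [v, lap_div_const, Function.comp]
    rw [neg_div', ← mul_div_assoc, ← add_div, heq, zero_div]

/-- Compactness of normalized positive solutions: if the potentials
`Q_j` are locally uniformly bounded and converge pointwise to `Q_∞`, and the
`u_j > 0` solve `-Δu_j + Q_j u_j = 0`, then some subsequence of
`û_j = u_j / u_j(x₀)` converges pointwise to a function `û_∞ > 0` with
`û_∞(x₀) = 1` solving `-Δû_∞ + Q_∞ û_∞ = 0`. -/
theorem compactness {V : Type*} [Countable V] (G : SimpleGraph V) [G.LocallyFinite]
    (μ : V → V → ℝ) (hsymm : ∀ x y, μ x y = μ y x)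
    (hpos : ∀ x y, G.Adj x y → 0 < μ x y) (hconn : G.Connected)
    (Q : ℕ → V → ℝ) (Qinf : V → ℝ)
    (hbd : ∀ S : Finset V, ∃ M : ℝ, ∀ j : ℕ, ∀ x ∈ S, |Q j x| ≤ M)
    (hconv : ∀ x, Tendsto (fun j => Q j x) atTop (nhds (Qinf x)))
    (u : ℕ → V → ℝ) (hupos : ∀ j x, 0 < u j x)
    (heq : ∀ j x, -lap G μ (u j) x + Q j x * u j x = 0)
    (x₀ : V) :
    ∃ φ : ℕ → ℕ, StrictMono φ ∧ ∃ uinf : V → ℝ,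
      (∀ x, Tendsto (fun k => u (φ k) x / u (φ k) x₀) atTop (nhds (uinf x))) ∧
      (∀ x, 0 < uinf x) ∧ uinf x₀ = 1 ∧
      ∀ x, -lap G μ uinf x + Qinf x * uinf x = 0 :=
  compactness_general G μ hpos hconn Q Qinf hbd hconv u hupos heq x₀
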